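/- arXiv:1709.05970 — 5 statements merged into one kernel-verified Lean document; each statement's English description precedes it below -/
import Mathlib

section
/- Let p_1, …, p_l be distinct primes, q = p_1·p_2···p_l, and let p be one of the primes p_1, …, p_l. Let F be a field of characteristic p (so the image of q in F is zero), let E = F^{q+1} with standard basis e_1, …, e_{q+1}, and define the one-dimensional subspaces A = span(e_1), B_i = span(e_{i+1}) for 1 ≤ i ≤ q−1, C = span(e_{q+1}), U = span(e_1 + ⋯ + e_q), Y = span(e_2 + ⋯ + e_{q+1}), W = span(e_1 − e_{q+1}), X = span(e_1 + ⋯ + e_q − e_{q+1}), V_i = span(e_{i+1} + e_{q+1}) for 1 ≤ i ≤ q−1, and Z = span(e_2 + ⋯ + e_q). Then every conditional term in the inequality below vanishes, the left-hand side equals 6q−5, the right-hand side equals 6q−6, and hence the inequality FAILS for these subspaces: (2q−1)H(A) + (2q−2)H(C) + Σ_{i=1}^{q−1} 2H(B_i) ≤ (q−1)(H(U) + H(Y) + H(W) + 2H(X)) + Σ_{i=1}^{q−1} H(V_i) + (7q−6)H(U | A, B_1, …, B_{q−1}) + (6q−5)H(Y | B_1, …, B_{q−1}, C) + Σ_{i=1}^{q−1}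 2q·H(V_i | Y, B_1, …, B_{i−1}, B_{i+1}, …, B_{q−1}) + (3q−3)H(W | U, Y) + (4q−3)H(X | U, C) + (2q−2)H(Z | W, X) + (2q−1)H(A | X, V_1, …, V_{q−1}) + (q−1)H(C | A, W) + Σ_{i=1}^{q−1} 2H(B_i | Z, B_1, …, B_{i−1}, B_{i+1}, …, B_{q−1}) + Σ_{i=1}^{q−1} H(C | V_i, B_i) + (5q−4)(H(A) − H(A, B_1, …, B_{q−1}, C)) + (6q−5)(Σ_{i=1}^{q−1} H(B_i) + H(C)) − (q−1)H(B_1, …, B_{q−1}, C). -/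
open Finset

/-- `H(S)`: the dimension of a subspace `S`, as an integer. -/
noncomputable def sdim (F : Type*) {E : Type*} [Field F] [AddCommGroup E] [Module F E]
    (S : Submodule F E) : ℤ :=
  Module.finrank F ↥S

/-- `H(S | T)`: the conditional term `dim (S + T) - dim T`, as an integer. -/
noncomputable def scdim (F : Type*) {E : Type*} [Field F] [AddCommGroup E] [Module F E]
    (S T : Submodule F E) : ℤ :=
  Module.finrank F ↥(S ⊔ T) - Module.finrank F ↥T

lemma sdim_eq (F : Type*) {E : Type*} [Field F] [AddCommGroup E] [Module F E]
    (S : Submodule F E) : sdim F S = (Module.finrank F ↥S : ℤ) := rfl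

lemma scdim_eq_zero_of_le {F E : Type*} [Field F] [AddCommGroup E] [Module F E]
    {S T : Submodule F E} (h : S ≤ T) : scdim F S T = 0 := by
  rw [scdim, sup_eq_right.mpr h, sub_self]

lemma sdim_span_singleton {F E : Type*} [Field F] [AddCommGroup E] [Module F E]
    {v : E} (hv : v ≠ 0) : sdim F (F ∙ v) = 1 := by
  rw [sdim_eq, finrank_span_singleton hv]; norm_num

lemma ne_zero_of_apply_eq_one {ι F : Type*} [Field F] {v : ι → F} {j : ι}
    (h : v j = 1) : v ≠ 0 := fun hv => one_ne_zero (α := F) (by rw [← h, hv, Pi.zero_apply])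

def vB' (F : Type*) [Field F] (q : ℕ) (i : Fin (q-1)) : Fin (q+1) → F :=
  fun j => if (j : ℕ) = (i : ℕ) + 1 then 1 else 0

def vV' (F : Type*) [Field F] (q : ℕ) (i : Fin (q-1)) : Fin (q+1) → F :=
  fun j => if (j : ℕ) = (i : ℕ) + 1 ∨ (j : ℕ) = q then 1 else 0

lemma sumB' (F : Type*) [Field F] (q : ℕ) (m : Fin (q+1)) :
    ∑ i : Fin (q-1), vB' F q i m = if 1 ≤ (m:ℕ) ∧ (m:ℕ) ≤ q-1 then (1:F) else 0 := by
  by_cases h : 1 ≤ (m:ℕ) ∧ (m:ℕ) ≤ q-1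
  · rw [if_pos h]
    have hlt : (m:ℕ) - 1 < q - 1 := by omega
    rw [Finset.sum_eq_single (⟨(m:ℕ)-1, hlt⟩ : Fin (q-1))]
    · simp only [vB']; rw [if_pos (by omega)]
    · intro j _ hj
      simp only [vB']; rw [if_neg]
      intro hc; exact hj (Fin.ext (by simp; omega))
    · simp
  · rw [if_neg h]
    refine Finset.sum_eq_zero fun j _ => ?_
    simp only [vB']; rw [if_neg]
    have := j.isLt; omega

lemma sumV' (F : Type*) [Field F] (q : ℕ) (h2q : 2 ≤ q) (hqF : (q:F) = 0) (m : Fin (q+1)) :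
    ∑ i : Fin (q-1), vV' F q i m
      = if 1 ≤ (m:ℕ) ∧ (m:ℕ) ≤ q-1 then (1:F) else if (m:ℕ) = q then -1 else 0 := by
  by_cases hmq : (m:ℕ) = q
  · rw [if_neg (by omega), if_pos hmq]
    have h1 : ∀ j : Fin (q-1), j ∈ Finset.univ → vV' F q j m = 1 := fun j _ => by
      simp only [vV']; rw [if_pos (Or.inr hmq)]
    rw [Finset.sum_congr rfl h1, Finset.sum_const, Finset.card_univ, Fintype.card_fin,
      nsmul_eq_mul, mul_one]
    have : ((q-1 : ℕ) : F) = (q:F) - 1 := by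
      rw [Nat.cast_sub (by omega), Nat.cast_one]
    rw [this, hqF]; ring
  · by_cases h : 1 ≤ (m:ℕ) ∧ (m:ℕ) ≤ q-1
    · rw [if_pos h]
      have hlt : (m:ℕ) - 1 < q - 1 := by omega
      rw [Finset.sum_eq_single (⟨(m:ℕ)-1, hlt⟩ : Fin (q-1))]
      · simp only [vV']; rw [if_pos (Or.inl (by omega))]
      · intro j _ hj
        simp only [vV']; rw [if_neg]
        rintro (hc | hc)
        · exact hj (Fin.ext (by simp; omega))
        · exact hmq hc
      · simp
    · rw [if_neg h, if_neg hmq]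
      refine Finset.sum_eq_zero fun j _ => ?_
      simp only [vV']; rw [if_neg]
      have := j.isLt; omega

def gBC (F : Type*) [Field F] (q : ℕ) : Fin q → (Fin (q+1) → F) :=
  fun i => Pi.single ⟨(i:ℕ)+1, Nat.succ_lt_succ i.isLt⟩ 1

lemma gBC_li (F : Type*) [Field F] (q : ℕ) : LinearIndependent F (gBC F q) := by
  have : gBC F q = ⇑(Pi.basisFun F (Fin (q+1))) ∘
      (fun i : Fin q => (⟨(i:ℕ)+1, Nat.succ_lt_succ i.isLt⟩ : Fin (q+1))) := by
    funext i; simp [gBC, Pi.basisFun_apply]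
  rw [this]
  exact (Pi.basisFun F (Fin (q+1))).linearIndependent.comp _
    (by intro a b hab; simpa [Fin.ext_iff] using hab)

def vA' (F : Type*) [Field F] (q : ℕ) : Fin (q+1) → F := fun j => if (j : ℕ) = 0 then 1 else 0
def vC' (F : Type*) [Field F] (q : ℕ) : Fin (q+1) → F := fun j => if (j : ℕ) = q then 1 else 0
def vU' (F : Type*) [Field F] (q : ℕ) : Fin (q+1) → F := fun j => if (j : ℕ) < q then 1 else 0
def vY' (F : Type*) [Field F] (q : ℕ) : Fin (q+1) → F := fun j => if 1 ≤ (j : ℕ) then 1 else 0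
def vW' (F : Type*) [Field F] (q : ℕ) : Fin (q+1) → F := fun j =>
  if (j : ℕ) = 0 then 1 else if (j : ℕ) = q then -1 else 0
def vX' (F : Type*) [Field F] (q : ℕ) : Fin (q+1) → F := fun j => if (j : ℕ) < q then 1 else -1
def vZ' (F : Type*) [Field F] (q : ℕ) : Fin (q+1) → F :=
  fun j => if 1 ≤ (j : ℕ) ∧ (j : ℕ) < q then 1 else 0

set_option maxHeartbeats 1000000 in
/-- Let `q` be the product of the distinct primes `p 1, …, p l`, and let `F`
be a field whose characteristic is one of these primes.  In `E = F^(q+1)` (with coordinates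
indexed by `Fin (q+1)`, so that the `1`-based basis vector `e k` is the indicator of the
`0`-based index `k - 1`), take the one-dimensional subspaces
`A = span (e 1)`, `B i = span (e (i+1))` (`1 ≤ i ≤ q-1`), `C = span (e (q+1))`,
`U = span (e 1 + ⋯ + e q)`, `Y = span (e 2 + ⋯ + e (q+1))`, `W = span (e 1 - e (q+1))`,
`X = span (e 1 + ⋯ + e q - e (q+1))`, `V i = span (e (i+1) + e (q+1))`,
`Z = span (e 2 + ⋯ + e q)`.
Then all conditional terms of the inequality of Theorem 1 vanish, its left-hand side equals
`6q - 5`, its right-hand side equals `6q - 6`, and the inequality fails. -/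
theorem rank_inequality_may_not_hold_char_in_set
    (l : ℕ) (p : Fin l → ℕ) (hp : ∀ i, (p i).Prime) (hpinj : Function.Injective p)
    (q : ℕ) (hq : q = ∏ i, p i) (k : Fin l)
    (F : Type*) [Field F] [CharP F (p k)]
    (A C U W X Y Z : Submodule F (Fin (q + 1) → F))
    (B V : Fin (q - 1) → Submodule F (Fin (q + 1) → F))
    (hA : A = F ∙ (fun j : Fin (q + 1) => if (j : ℕ) = 0 then (1 : F) else 0))
    (hB : ∀ i, B i = F ∙ (fun j : Fin (q + 1) => if (j : ℕ) = (i : ℕ) + 1 then (1 : F) else 0))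
    (hC : C = F ∙ (fun j : Fin (q + 1) => if (j : ℕ) = q then (1 : F) else 0))
    (hU : U = F ∙ (fun j : Fin (q + 1) => if (j : ℕ) < q then (1 : F) else 0))
    (hY : Y = F ∙ (fun j : Fin (q + 1) => if 1 ≤ (j : ℕ) then (1 : F) else 0))
    (hW : W = F ∙ (fun j : Fin (q + 1) =>
      if (j : ℕ) = 0 then (1 : F) else if (j : ℕ) = q then -1 else 0))
    (hX : X = F ∙ (fun j : Fin (q + 1) => if (j : ℕ) < q then (1 : F) else -1))
    (hV : ∀ i, V i = F ∙ (fun j : Fin (q + 1) =>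
      if (j : ℕ) = (i : ℕ) + 1 ∨ (j : ℕ) = q then (1 : F) else 0))
    (hZ : Z = F ∙ (fun j : Fin (q + 1) => if 1 ≤ (j : ℕ) ∧ (j : ℕ) < q then (1 : F) else 0)) :
    scdim F U (A ⊔ ⨆ i, B i) = 0 ∧
    scdim F Y ((⨆ i, B i) ⊔ C) = 0 ∧
    (∀ i, scdim F (V i) (Y ⊔ ⨆ j ∈ univ.erase i, B j) = 0) ∧
    scdim F W (U ⊔ Y) = 0 ∧
    scdim F X (U ⊔ C) = 0 ∧
    scdim F Z (W ⊔ X) = 0 ∧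
    scdim F A (X ⊔ ⨆ i, V i) = 0 ∧
    scdim F C (A ⊔ W) = 0 ∧
    (∀ i, scdim F (B i) (Z ⊔ ⨆ j ∈ univ.erase i, B j) = 0) ∧
    (∀ i, scdim F C (V i ⊔ B i) = 0) ∧
    ((2 * (q : ℤ) - 1) * sdim F A + (2 * (q : ℤ) - 2) * sdim F C
        + ∑ i : Fin (q - 1), 2 * sdim F (B i)
      = 6 * (q : ℤ) - 5) ∧
    (((q : ℤ) - 1) * (sdim F U + sdim F Y + sdim F W + 2 * sdim F X)
        + ∑ i : Fin (q - 1), sdim F (V i)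
        + (7 * (q : ℤ) - 6) * scdim F U (A ⊔ ⨆ i, B i)
        + (6 * (q : ℤ) - 5) * scdim F Y ((⨆ i, B i) ⊔ C)
        + ∑ i : Fin (q - 1), (2 * (q : ℤ)) * scdim F (V i) (Y ⊔ ⨆ j ∈ univ.erase i, B j)
        + (3 * (q : ℤ) - 3) * scdim F W (U ⊔ Y)
        + (4 * (q : ℤ) - 3) * scdim F X (U ⊔ C)
        + (2 * (q : ℤ) - 2) * scdim F Z (W ⊔ X)
        + (2 * (q : ℤ) - 1) * scdim F A (X ⊔ ⨆ i, V i)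
        + ((q : ℤ) - 1) * scdim F C (A ⊔ W)
        + ∑ i : Fin (q - 1), 2 * scdim F (B i) (Z ⊔ ⨆ j ∈ univ.erase i, B j)
        + ∑ i : Fin (q - 1), scdim F C (V i ⊔ B i)
        + (5 * (q : ℤ) - 4) * (sdim F A - sdim F (A ⊔ (⨆ i, B i) ⊔ C))
        + (6 * (q : ℤ) - 5) * ((∑ i : Fin (q - 1), sdim F (B i)) + sdim F C)
        - ((q : ℤ) - 1) * sdim F ((⨆ i, B i) ⊔ C)
      = 6 * (q : ℤ) - 6) ∧
    ¬ ((2 * (q : ℤ) - 1) * sdim F A + (2 * (q : ℤ) - 2) * sdim F C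
        + ∑ i : Fin (q - 1), 2 * sdim F (B i)
      ≤ ((q : ℤ) - 1) * (sdim F U + sdim F Y + sdim F W + 2 * sdim F X)
        + ∑ i : Fin (q - 1), sdim F (V i)
        + (7 * (q : ℤ) - 6) * scdim F U (A ⊔ ⨆ i, B i)
        + (6 * (q : ℤ) - 5) * scdim F Y ((⨆ i, B i) ⊔ C)
        + ∑ i : Fin (q - 1), (2 * (q : ℤ)) * scdim F (V i) (Y ⊔ ⨆ j ∈ univ.erase i, B j)
        + (3 * (q : ℤ) - 3) * scdim F W (U ⊔ Y)
        + (4 * (q : ℤ) - 3) * scdim F X (U ⊔ C)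
        + (2 * (q : ℤ) - 2) * scdim F Z (W ⊔ X)
        + (2 * (q : ℤ) - 1) * scdim F A (X ⊔ ⨆ i, V i)
        + ((q : ℤ) - 1) * scdim F C (A ⊔ W)
        + ∑ i : Fin (q - 1), 2 * scdim F (B i) (Z ⊔ ⨆ j ∈ univ.erase i, B j)
        + ∑ i : Fin (q - 1), scdim F C (V i ⊔ B i)
        + (5 * (q : ℤ) - 4) * (sdim F A - sdim F (A ⊔ (⨆ i, B i) ⊔ C))
        + (6 * (q : ℤ) - 5) * ((∑ i : Fin (q - 1), sdim F (B i)) + sdim F C)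
        - ((q : ℤ) - 1) * sdim F ((⨆ i, B i) ⊔ C)) := by
  have hdvd : p k ∣ q := hq ▸ Finset.dvd_prod_of_mem p (Finset.mem_univ k)
  have hqpos : 0 < q := hq ▸ Finset.prod_pos (fun i _ => (hp i).pos)
  have h2q : 2 ≤ q := le_trans (hp k).two_le (Nat.le_of_dvd hqpos hdvd)
  have hqF : (q : F) = 0 := (CharP.cast_eq_zero_iff F (p k) q).mpr hdvd
  have hA2 : A = F ∙ vA' F q := hA
  have hC2 : C = F ∙ vC' F q := hC
  have hU2 : U = F ∙ vU' F q := hU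
  have hY2 : Y = F ∙ vY' F q := hY
  have hW2 : W = F ∙ vW' F q := hW
  have hX2 : X = F ∙ vX' F q := hX
  have hZ2 : Z = F ∙ vZ' F q := hZ
  have hB2 : ∀ i, B i = F ∙ vB' F q i := hB
  have hV2 : ∀ i, V i = F ∙ vV' F q i := hV
  clear hA hC hU hY hW hX hZ hB hV
  have memA : vA' F q ∈ A := by rw [hA2]; exact Submodule.mem_span_singleton_self _
  have memC : vC' F q ∈ C := by rw [hC2]; exact Submodule.mem_span_singleton_self _
  have memU : vU' F q ∈ U := by rw [hU2]; exact Submodule.mem_span_singleton_self _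
  have memY : vY' F q ∈ Y := by rw [hY2]; exact Submodule.mem_span_singleton_self _
  have memW : vW' F q ∈ W := by rw [hW2]; exact Submodule.mem_span_singleton_self _
  have memX : vX' F q ∈ X := by rw [hX2]; exact Submodule.mem_span_singleton_self _
  have memZ : vZ' F q ∈ Z := by rw [hZ2]; exact Submodule.mem_span_singleton_self _
  have memB : ∀ i, vB' F q i ∈ B i := fun i => by
    rw [hB2 i]; exact Submodule.mem_span_singleton_self _
  have memV : ∀ i, vV' F q i ∈ V i := fun i => by
    rw [hV2 i]; exact Submodule.mem_span_singleton_self _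
  -- the ten vanishing conditional terms
  have hUz : scdim F U (A ⊔ ⨆ i, B i) = 0 := by
    apply scdim_eq_zero_of_le
    rw [hU2, Submodule.span_singleton_le_iff_mem]
    have h1 : vU' F q = vA' F q + ∑ i : Fin (q-1), vB' F q i := by
      funext m
      have hm := m.isLt
      rw [Pi.add_apply, Finset.sum_apply, sumB' F q m]
      simp only [vU', vA']
      split_ifs <;> first | (exfalso; omega) | norm_num
    rw [h1]
    exact add_mem (Submodule.mem_sup_left memA)
      (Submodule.mem_sup_right (sum_mem fun i _ => Submodule.mem_iSup_of_mem i (memB i)))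
  have hYz : scdim F Y ((⨆ i, B i) ⊔ C) = 0 := by
    apply scdim_eq_zero_of_le
    rw [hY2, Submodule.span_singleton_le_iff_mem]
    have h1 : vY' F q = (∑ i : Fin (q-1), vB' F q i) + vC' F q := by
      funext m
      have hm := m.isLt
      rw [Pi.add_apply, Finset.sum_apply, sumB' F q m]
      simp only [vY', vC']
      split_ifs <;> first | (exfalso; omega) | norm_num
    rw [h1]
    exact add_mem
      (Submodule.mem_sup_left (sum_mem fun i _ => Submodule.mem_iSup_of_mem i (memB i)))
      (Submodule.mem_sup_right memC)
  have hVz : ∀ i, scdim F (V i) (Y ⊔ ⨆ j ∈ univ.erase i, B j) = 0 := by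
    intro i
    apply scdim_eq_zero_of_le
    rw [hV2 i, Submodule.span_singleton_le_iff_mem]
    have h1 : vV' F q i = vY' F q - ∑ j ∈ univ.erase i, vB' F q j := by
      funext m
      have hm := m.isLt
      have hi := i.isLt
      rw [Pi.sub_apply, Finset.sum_apply, Finset.sum_erase_eq_sub (Finset.mem_univ i),
        sumB' F q m]
      simp only [vV', vY', vB']
      split_ifs <;> first | (exfalso; omega) | norm_num
    rw [h1]
    refine sub_mem (Submodule.mem_sup_left memY) (Submodule.mem_sup_right
      (sum_mem fun j hj => ?_))
    exact Submodule.mem_iSup_of_mem j (Submodule.mem_iSup_of_mem hj (memB j))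
  have hWz : scdim F W (U ⊔ Y) = 0 := by
    apply scdim_eq_zero_of_le
    rw [hW2, Submodule.span_singleton_le_iff_mem]
    have h1 : vW' F q = vU' F q - vY' F q := by
      funext m
      have hm := m.isLt
      rw [Pi.sub_apply]
      simp only [vW', vU', vY']
      split_ifs <;> first | (exfalso; omega) | norm_num
    rw [h1]
    exact sub_mem (Submodule.mem_sup_left memU) (Submodule.mem_sup_right memY)
  have hXz : scdim F X (U ⊔ C) = 0 := by
    apply scdim_eq_zero_of_le
    rw [hX2, Submodule.span_singleton_le_iff_mem]
    have h1 : vX' F q = vU' F q - vC' F q := by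
      funext m
      have hm := m.isLt
      rw [Pi.sub_apply]
      simp only [vX', vU', vC']
      split_ifs <;> first | (exfalso; omega) | norm_num
    rw [h1]
    exact sub_mem (Submodule.mem_sup_left memU) (Submodule.mem_sup_right memC)
  have hZz : scdim F Z (W ⊔ X) = 0 := by
    apply scdim_eq_zero_of_le
    rw [hZ2, Submodule.span_singleton_le_iff_mem]
    have h1 : vZ' F q = vX' F q - vW' F q := by
      funext m
      have hm := m.isLt
      rw [Pi.sub_apply]
      simp only [vZ', vX', vW']
      split_ifs <;> first | (exfalso; omega) | norm_num
    rw [h1]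
    exact sub_mem (Submodule.mem_sup_right memX) (Submodule.mem_sup_left memW)
  have hAz : scdim F A (X ⊔ ⨆ i, V i) = 0 := by
    apply scdim_eq_zero_of_le
    rw [hA2, Submodule.span_singleton_le_iff_mem]
    have h1 : vA' F q = vX' F q - ∑ i : Fin (q-1), vV' F q i := by
      funext m
      have hm := m.isLt
      rw [Pi.sub_apply, Finset.sum_apply, sumV' F q h2q hqF m]
      simp only [vA', vX']
      split_ifs <;> first | (exfalso; omega) | norm_num
    rw [h1]
    exact sub_mem (Submodule.mem_sup_left memX)
      (Submodule.mem_sup_right (sum_mem fun i _ => Submodule.mem_iSup_of_mem i (memV i)))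
  have hCz : scdim F C (A ⊔ W) = 0 := by
    apply scdim_eq_zero_of_le
    rw [hC2, Submodule.span_singleton_le_iff_mem]
    have h1 : vC' F q = vA' F q - vW' F q := by
      funext m
      have hm := m.isLt
      rw [Pi.sub_apply]
      simp only [vC', vA', vW']
      split_ifs <;> first | (exfalso; omega) | norm_num
    rw [h1]
    exact sub_mem (Submodule.mem_sup_left memA) (Submodule.mem_sup_right memW)
  have hBz : ∀ i, scdim F (B i) (Z ⊔ ⨆ j ∈ univ.erase i, B j) = 0 := by
    intro i
    apply scdim_eq_zero_of_le
    rw [hB2 i, Submodule.span_singleton_le_iff_mem]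
    have h1 : vB' F q i = vZ' F q - ∑ j ∈ univ.erase i, vB' F q j := by
      funext m
      have hm := m.isLt
      have hi := i.isLt
      rw [Pi.sub_apply, Finset.sum_apply, Finset.sum_erase_eq_sub (Finset.mem_univ i),
        sumB' F q m]
      simp only [vZ', vB']
      split_ifs <;> first | (exfalso; omega) | norm_num
    rw [h1]
    refine sub_mem (Submodule.mem_sup_left memZ) (Submodule.mem_sup_right
      (sum_mem fun j hj => ?_))
    exact Submodule.mem_iSup_of_mem j (Submodule.mem_iSup_of_mem hj (memB j))
  have hCz' : ∀ i, scdim F C (V i ⊔ B i) = 0 := by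
    intro i
    apply scdim_eq_zero_of_le
    rw [hC2, Submodule.span_singleton_le_iff_mem]
    have h1 : vC' F q = vV' F q i - vB' F q i := by
      funext m
      have hm := m.isLt
      have hi := i.isLt
      rw [Pi.sub_apply]
      simp only [vC', vV', vB']
      split_ifs <;> first | (exfalso; omega) | norm_num
    rw [h1]
    exact sub_mem (Submodule.mem_sup_left (memV i)) (Submodule.mem_sup_right (memB i))
  -- dimensions of the single subspaces
  have hdA : sdim F A = 1 := by
    rw [hA2]
    refine sdim_span_singleton (ne_zero_of_apply_eq_one (j := ⟨0, by omega⟩) ?_)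
    simp only [vA', Fin.val_mk]; norm_num
  have hdC : sdim F C = 1 := by
    rw [hC2]
    refine sdim_span_singleton (ne_zero_of_apply_eq_one (j := ⟨q, by omega⟩) ?_)
    simp only [vC', Fin.val_mk]; norm_num
  have hdU : sdim F U = 1 := by
    rw [hU2]
    refine sdim_span_singleton (ne_zero_of_apply_eq_one (j := ⟨0, by omega⟩) ?_)
    simp only [vU', Fin.val_mk]; rw [if_pos (by omega)]
  have hdY : sdim F Y = 1 := by
    rw [hY2]
    refine sdim_span_singleton (ne_zero_of_apply_eq_one (j := ⟨q, by omega⟩) ?_)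
    simp only [vY', Fin.val_mk]; rw [if_pos (by omega)]
  have hdW : sdim F W = 1 := by
    rw [hW2]
    refine sdim_span_singleton (ne_zero_of_apply_eq_one (j := ⟨0, by omega⟩) ?_)
    simp only [vW', Fin.val_mk]; norm_num
  have hdX : sdim F X = 1 := by
    rw [hX2]
    refine sdim_span_singleton (ne_zero_of_apply_eq_one (j := ⟨0, by omega⟩) ?_)
    simp only [vX', Fin.val_mk]; rw [if_pos (by omega)]
  have hdB : ∀ i, sdim F (B i) = 1 := fun i => by
    rw [hB2 i]
    refine sdim_span_singleton (ne_zero_of_apply_eq_one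
      (j := ⟨(i:ℕ)+1, by have := i.isLt; omega⟩) ?_)
    simp [vB']
  have hdV : ∀ i, sdim F (V i) = 1 := fun i => by
    rw [hV2 i]
    refine sdim_span_singleton (ne_zero_of_apply_eq_one (j := ⟨q, by omega⟩) ?_)
    simp [vV']
  -- dimension of (⨆ B) ⊔ C
  have hBCspan : (⨆ i, B i) ⊔ C = Submodule.span F (Set.range (gBC F q)) := by
    apply le_antisymm
    · apply sup_le
      · apply iSup_le; intro i
        rw [hB2 i, Submodule.span_singleton_le_iff_mem]
        have h1 : vB' F q i = gBC F q ⟨(i:ℕ), by have := i.isLt; omega⟩ := by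
          funext m
          have hi := i.isLt
          simp only [vB', gBC, Pi.single_apply]
          refine if_congr ?_ rfl rfl
          simp only [Fin.ext_iff, Fin.val_mk]
          try omega
        rw [h1]; exact Submodule.subset_span ⟨_, rfl⟩
      · rw [hC2, Submodule.span_singleton_le_iff_mem]
        have h1 : vC' F q = gBC F q ⟨q-1, by omega⟩ := by
          funext m
          simp only [vC', gBC, Pi.single_apply]
          refine if_congr ?_ rfl rfl
          simp only [Fin.ext_iff, Fin.val_mk]
          omega
        rw [h1]; exact Submodule.subset_span ⟨_, rfl⟩
    · rw [Submodule.span_le]; rintro _ ⟨i, rfl⟩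
      have hi := i.isLt
      by_cases hiq : (i:ℕ) < q-1
      · apply Submodule.mem_sup_left
        apply Submodule.mem_iSup_of_mem ⟨(i:ℕ), hiq⟩
        rw [hB2]
        have h1 : gBC F q i = vB' F q ⟨(i:ℕ), hiq⟩ := by
          funext m
          simp only [vB', gBC, Pi.single_apply]
          refine if_congr ?_ rfl rfl
          simp only [Fin.ext_iff, Fin.val_mk]
          try omega
        rw [h1]; exact Submodule.mem_span_singleton_self _
      · apply Submodule.mem_sup_right
        rw [hC2]
        have h1 : gBC F q i = vC' F q := by
          funext m
          simp only [vC', gBC, Pi.single_apply]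
          refine if_congr ?_ rfl rfl
          simp only [Fin.ext_iff, Fin.val_mk]
          omega
        rw [h1]; exact Submodule.mem_span_singleton_self _
  have hdBC : sdim F ((⨆ i, B i) ⊔ C) = (q : ℤ) := by
    rw [sdim_eq, hBCspan, finrank_span_eq_card (gBC_li F q), Fintype.card_fin]
  -- dimension of A ⊔ (⨆ B) ⊔ C
  have hABCtop : A ⊔ (⨆ i, B i) ⊔ C = ⊤ := by
    rw [eq_top_iff, ← (Pi.basisFun F (Fin (q+1))).span_eq, Submodule.span_le]
    rintro _ ⟨j, rfl⟩
    have hj := j.isLt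
    rw [SetLike.mem_coe, Pi.basisFun_apply]
    by_cases hj0 : (j:ℕ) = 0
    · apply Submodule.mem_sup_left; apply Submodule.mem_sup_left
      rw [hA2]
      have h1 : (Pi.single j 1 : Fin (q+1) → F) = vA' F q := by
        funext m
        simp only [vA', Pi.single_apply]
        refine if_congr ?_ rfl rfl
        simp only [Fin.ext_iff]
        omega
      rw [h1]; exact Submodule.mem_span_singleton_self _
    · by_cases hjq : (j:ℕ) = q
      · apply Submodule.mem_sup_right
        rw [hC2]
        have h1 : (Pi.single j 1 : Fin (q+1) → F) = vC' F q := by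
          funext m
          simp only [vC', Pi.single_apply]
          refine if_congr ?_ rfl rfl
          simp only [Fin.ext_iff]
          omega
        rw [h1]; exact Submodule.mem_span_singleton_self _
      · apply Submodule.mem_sup_left; apply Submodule.mem_sup_right
        apply Submodule.mem_iSup_of_mem ⟨(j:ℕ)-1, by omega⟩
        rw [hB2]
        have h1 : (Pi.single j 1 : Fin (q+1) → F) = vB' F q ⟨(j:ℕ)-1, by omega⟩ := by
          funext m
          simp only [vB', Pi.single_apply, Fin.val_mk]
          refine if_congr ?_ rfl rfl
          simp only [Fin.ext_iff]
          omega
        rw [h1]; exact Submodule.mem_span_singleton_self _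
  have hdABC : sdim F (A ⊔ (⨆ i, B i) ⊔ C) = (q : ℤ) + 1 := by
    rw [sdim_eq, hABCtop, finrank_top, Module.finrank_pi, Fintype.card_fin]
    push_cast; ring
  have hcast : ((q - 1 : ℕ) : ℤ) = (q : ℤ) - 1 := by omega
  have hLHS : (2 * (q : ℤ) - 1) * sdim F A + (2 * (q : ℤ) - 2) * sdim F C
        + ∑ i : Fin (q - 1), 2 * sdim F (B i) = 6 * (q : ℤ) - 5 := by
    rw [hdA, hdC]
    rw [Finset.sum_congr rfl (fun i _ => by rw [hdB i])]
    rw [Finset.sum_const, Finset.card_univ, Fintype.card_fin, nsmul_eq_mul, hcast]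
    ring
  have hRHS : ((q : ℤ) - 1) * (sdim F U + sdim F Y + sdim F W + 2 * sdim F X)
        + ∑ i : Fin (q - 1), sdim F (V i)
        + (7 * (q : ℤ) - 6) * scdim F U (A ⊔ ⨆ i, B i)
        + (6 * (q : ℤ) - 5) * scdim F Y ((⨆ i, B i) ⊔ C)
        + ∑ i : Fin (q - 1), (2 * (q : ℤ)) * scdim F (V i) (Y ⊔ ⨆ j ∈ univ.erase i, B j)
        + (3 * (q : ℤ) - 3) * scdim F W (U ⊔ Y)
        + (4 * (q : ℤ) - 3) * scdim F X (U ⊔ C)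
        + (2 * (q : ℤ) - 2) * scdim F Z (W ⊔ X)
        + (2 * (q : ℤ) - 1) * scdim F A (X ⊔ ⨆ i, V i)
        + ((q : ℤ) - 1) * scdim F C (A ⊔ W)
        + ∑ i : Fin (q - 1), 2 * scdim F (B i) (Z ⊔ ⨆ j ∈ univ.erase i, B j)
        + ∑ i : Fin (q - 1), scdim F C (V i ⊔ B i)
        + (5 * (q : ℤ) - 4) * (sdim F A - sdim F (A ⊔ (⨆ i, B i) ⊔ C))
        + (6 * (q : ℤ) - 5) * ((∑ i : Fin (q - 1), sdim F (B i)) + sdim F C)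
        - ((q : ℤ) - 1) * sdim F ((⨆ i, B i) ⊔ C) = 6 * (q : ℤ) - 6 := by
    simp only [hUz, hYz, hWz, hXz, hZz, hAz, hCz, hVz, hBz, hCz', hdA, hdB, hdC, hdU,
      hdY, hdW, hdX, hdV, hdBC, hdABC, mul_zero, mul_one, Finset.sum_const,
      Finset.card_univ, Fintype.card_fin, nsmul_eq_mul, add_zero, Finset.sum_const_zero]
    rw [hcast]; ring
  refine ⟨hUz, hYz, hVz, hWz, hXz, hZz, hAz, hCz, hBz, hCz', hLHS, hRHS, ?_⟩
  intro hle
  rw [hLHS, hRHS] at hle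
  omega
end

section
/- Let V be a finite-dimensional vector space over a field and let A, A_1, …, A_m be subspaces of V. Then there exist linear maps f_i : A → V with image of f_i contained in A_i for each 1 ≤ i ≤ m, and a subspace A' of A, such that f_1(x) + f_2(x) + ⋯ + f_m(x) = x for all x ∈ A', and dim A − dim A' ≤ dim(A + A_1 + ⋯ + A_m) − dim(A_1 + ⋯ + A_m). -/
/-!
Take `A' = A ∩ T` with `T = A₁ + ⋯ + A_m`. The summation map `A₁ × ⋯ × A_m → V` has image
`T`, so a linear right inverse on that image, extended linearly to all of `V`, splits
every vector of `T` into linear components `f_i x ∈ A_i`. The dimension bound is then an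
equality, the modular law `dim A + dim T = dim (A + T) + dim (A ∩ T)`.
-/

namespace LinearMap

variable {K M V : Type*} [DivisionRing K] [AddCommGroup M] [Module K M] [AddCommGroup V]
  [Module K V]

theorem exists_rightInverse_on_range (π : M →ₗ[K] V) :
    ∃ s : V →ₗ[K] M, ∀ y ∈ range π, π (s y) = y := by
  obtain ⟨σ, hσ⟩ := π.rangeRestrict.exists_rightInverse_of_surjective π.range_rangeRestrict
  obtain ⟨s, hs⟩ := LinearMap.exists_extend σ
  refine ⟨s, fun y hy => ?_⟩
  have hsy : s y = σ ⟨y, hy⟩ := congr($hs ⟨y, hy⟩)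
  rw [hsy]
  exact congr(Subtype.val ($hσ ⟨y, hy⟩))

end LinearMap

namespace Submodule

variable {K V ι : Type*} [DivisionRing K] [AddCommGroup V] [Module K V] [Fintype ι]

theorem iSup_le_range_sum_subtype_comp_proj (p : ι → Submodule K V) :
    ⨆ i, p i ≤ LinearMap.range (∑ i, (p i).subtype ∘ₗ LinearMap.proj i) := by
  intro x hx
  obtain ⟨μ, rfl⟩ :=
    (mem_iSup_finset_iff_exists_sum (s := Finset.univ) p x).1 (by simpa using hx)
  exact ⟨μ, by simp⟩

theorem exists_linearMap_sum_eq_of_mem_iSup (p : ι → Submodule K V) :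
    ∃ f : ι → V →ₗ[K] V,
      (∀ i, LinearMap.range (f i) ≤ p i) ∧ ∀ x ∈ ⨆ i, p i, ∑ i, f i x = x := by
  set π := ∑ i, (p i).subtype ∘ₗ LinearMap.proj i
  obtain ⟨s, hs⟩ := π.exists_rightInverse_on_range
  refine ⟨fun i => (p i).subtype ∘ₗ LinearMap.proj i ∘ₗ s, ?_, fun x hx => ?_⟩
  · rintro i _ ⟨y, rfl⟩
    exact (s y i).2
  · simpa [π] using hs x (iSup_le_range_sum_subtype_comp_proj p hx)

theorem finrank_sub_finrank_comap_subtype_eq [FiniteDimensional K V] (A T : Submodule K V) :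
    (Module.finrank K A : ℤ) - Module.finrank K (T.comap A.subtype)
      = (Module.finrank K ↥(A ⊔ T) : ℤ) - Module.finrank K T := by
  have hcomap : Module.finrank K (T.comap A.subtype) = Module.finrank K ↥(A ⊓ T) := by
    rw [← map_comap_subtype, finrank_map_subtype_eq]
  have := finrank_sup_add_finrank_inf_eq A T
  omega

end Submodule

/-- Given subspaces `A, A 1, …, A m` of a finite-dimensional vector space `V`,
there exist linear maps `f i : A → V` with range contained in `A i`, and a subspace `A'` of `A`,
such that `∑ i, f i x = x` for all `x ∈ A'` and
`dim A - dim A' ≤ dim (A + A₁ + ⋯ + A_m) - dim (A₁ + ⋯ + A_m)`. -/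
theorem exists_decomposition_identity_on_subspace
    (F V : Type*) [Field F] [AddCommGroup V] [Module F V] [FiniteDimensional F V]
    (m : ℕ) (A : Submodule F V) (Ai : Fin m → Submodule F V) :
    ∃ (f : Fin m → (↥A →ₗ[F] V)) (A' : Submodule F ↥A),
      (∀ i, LinearMap.range (f i) ≤ Ai i) ∧
      (∀ x ∈ A', ∑ i, f i x = (x : V)) ∧
      (Module.finrank F ↥A : ℤ) - Module.finrank F ↥A'
        ≤ (Module.finrank F ↥(A ⊔ ⨆ i, Ai i) : ℤ) - Module.finrank F ↥(⨆ i, Ai i) := by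
  obtain ⟨g, hg_range, hg_sum⟩ := Submodule.exists_linearMap_sum_eq_of_mem_iSup Ai
  refine ⟨fun i => g i ∘ₗ A.subtype, (⨆ i, Ai i).comap A.subtype, fun i => ?_,
    fun x hx => hg_sum x hx, (Submodule.finrank_sub_finrank_comap_subtype_eq A _).le⟩
  exact (LinearMap.range_comp_le_range _ _).trans (hg_range i)
end

section
/- Let V be a finite-dimensional vector space over a field, let A, A_1, …, A_m be subspaces of V, and for 1 ≤ i ≤ m let f_i : A → V be linear maps with image of f_i contained in A_i such that f_1(x) + f_2(x) + ⋯ + f_m(x) = 0 for all x ∈ A. Then there exists a subspace A' of A such that f_i(x) = 0 for all x ∈ A' and all 1 ≤ i ≤ m, and dim A − dim A' ≤ dim A_1 + dim A_2 + ⋯ + dim A_m − dim(A_1 + A_2 + ⋯ + A_m). -/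
/-- If linear maps `f i : A → V` have ranges contained in subspaces `A i` and
sum to zero on all of `A`, then there is a subspace `A'` of `A` on which every `f i` vanishes,
with `dim A - dim A' ≤ ∑ i, dim (A i) - dim (A₁ + ⋯ + A_m)`. -/
theorem exists_subspace_all_vanish
    (F V : Type*) [Field F] [AddCommGroup V] [Module F V] [FiniteDimensional F V]
    (m : ℕ) (A : Submodule F V) (Ai : Fin m → Submodule F V)
    (f : Fin m → (↥A →ₗ[F] V))
    (hrange : ∀ i, LinearMap.range (f i) ≤ Ai i)
    (hsum : ∀ x : ↥A, ∑ i, f i x = 0) :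
    ∃ A' : Submodule F ↥A,
      (∀ i, ∀ x ∈ A', f i x = 0) ∧
      (Module.finrank F ↥A : ℤ) - Module.finrank F ↥A'
        ≤ (∑ i, (Module.finrank F ↥(Ai i) : ℤ)) - Module.finrank F ↥(⨆ i, Ai i) := by
  classical
  -- the combined map g : A → Π i, Ai i
  set g : ↥A →ₗ[F] (∀ i, ↥(Ai i)) :=
    LinearMap.pi (fun i => (f i).codRestrict (Ai i) (fun x => hrange i ⟨x, rfl⟩)) with hg
  -- the summation map σ : (Π i, Ai i) → V
  set σ : (∀ i, ↥(Ai i)) →ₗ[F] V :=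
    ∑ i, (Ai i).subtype.comp (LinearMap.proj i) with hσ
  have hσ_apply : ∀ v : ∀ i, ↥(Ai i), σ v = ∑ i, (v i : V) := by
    intro v
    simp [hσ, LinearMap.sum_apply]
  refine ⟨LinearMap.ker g, ?_, ?_⟩
  · intro i x hx
    have : g x = 0 := hx
    have := congrFun this i
    exact congrArg Subtype.val this
  · -- range σ = ⨆ Ai
    have hrangeσ : LinearMap.range σ = ⨆ i, Ai i := by
      apply le_antisymm
      · rintro _ ⟨v, rfl⟩
        rw [hσ_apply]
        exact Submodule.sum_mem _ fun i _ =>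
          Submodule.mem_iSup_of_mem i (v i).2
      · refine iSup_le fun i a ha => ?_
        refine ⟨Pi.single i ⟨a, ha⟩, ?_⟩
        rw [hσ_apply]
        rw [Finset.sum_eq_single i]
        · simp
        · intro j _ hj
          simp [Pi.single_eq_of_ne hj]
        · simp
    -- range g ≤ ker σ
    have hsub : LinearMap.range g ≤ LinearMap.ker σ := by
      rintro _ ⟨x, rfl⟩
      simp only [LinearMap.mem_ker, hσ_apply]
      simpa [hg] using hsum x
    have h1 : Module.finrank F (LinearMap.range g) + Module.finrank F (LinearMap.ker g)
        = Module.finrank F ↥A := LinearMap.finrank_range_add_finrank_ker g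
    have h2 : Module.finrank F (LinearMap.range σ) + Module.finrank F (LinearMap.ker σ)
        = Module.finrank F (∀ i, ↥(Ai i)) := LinearMap.finrank_range_add_finrank_ker σ
    have h3 : Module.finrank F (∀ i, ↥(Ai i)) = ∑ i, Module.finrank F ↥(Ai i) :=
      Module.finrank_pi_fintype F
    have h4 : Module.finrank F (LinearMap.range g) ≤ Module.finrank F (LinearMap.ker σ) :=
      Submodule.finrank_mono hsub
    have h5 : Module.finrank F (LinearMap.range σ) = Module.finrank F ↥(⨆ i, Ai i) := by
      rw [hrangeσ]
    have hc : (∑ i, (Module.finrank F ↥(Ai i) : ℤ)) = ((∑ i, Module.finrank F ↥(Ai i) : ℕ) : ℤ) := by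
      push_cast; rfl
    rw [hc]
    omega
end

section
/- Let F be a field, m ≥ 1, and q ≥ 2 integers. Suppose G, L, D_1, D_2, D_3, D_5, D_6, M_1, M_2, M_3, M_4, M_5 are m × m matrices over F, and for each i ∈ {1, …, q−1} there are m × m matrices P_i, Q_i, K_i, X_i, W_i, R_i, V_i, Z_i over F, and for each ordered pair i ≠ k in {1, …, q−1} an m × m matrix U_{ik} over F, satisfying: (a) G·D_5·(M_1 P_i + M_2 Q_i) = 0 for all i; (b) G·D_5·M_2·D_2 = I; (c) X_i·K_i·(M_4 M_1 + M_5 M_3)·D_1 = 0 for all i; (d) X_i·K_i·(M_4(M_1 P_i + M_2 Q_i) + M_5 M_3 P_i) = I for all i; (e) X_i·K_i·(M_4 M_2 D_2 + M_5 D_3) = 0 for all i; (f) L·D_6·M_3·D_1 = I; (g) L·(D_6 M_3 P_i + R_i W_i Q_i + Σ_{k ≠ i} R_k (W_k Q_i + U_{ik})) = 0 for all i; (h) L·(D_6 D_3 + Σ_{k=1}^{q−1} R_k W_k D_2) = 0; (i) Z_i·V_i·(W_i Q_k + U_{ki}) = 0 for all i ≠ k; and (j) Z_i·V_i·W_i·D_2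 = I for all i. Then the image of q in F is zero (i.e., the characteristic of F divides q). -/
open Finset

section helpers
variable {n F : Type*} [Fintype n] [DecidableEq n] [Field F]

private lemma mcomm {A B : Matrix n n F} (h : A * B = 1) : B * A = 1 :=
  mul_eq_one_comm.mp h

private lemma cancelL {A B X Y : Matrix n n F} (h : A * B = 1) (h2 : A * X = A * Y) : X = Y := by
  have hba := mcomm h
  calc X = B * A * X := by rw [hba, one_mul]
    _ = B * (A * Y) := by rw [mul_assoc, h2]
    _ = B * A * Y := by rw [mul_assoc]
    _ = Y := by rw [hba, one_mul]

private lemma cancelR {A B X Y : Matrix n n F} (h : A * B = 1) (h2 : X * A = Y * A) : X = Y := by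
  calc X = X * (A * B) := by rw [h, mul_one]
    _ = X * A * B := by rw [mul_assoc]
    _ = Y * A * B := by rw [h2]
    _ = Y * (A * B) := by rw [mul_assoc]
    _ = Y := by rw [h, mul_one]

private lemma zeroL {A B X : Matrix n n F} (h : A * B = 1) (h2 : A * X = 0) : X = 0 :=
  cancelL h (by rw [h2, mul_zero])

private lemma zeroR {A B X : Matrix n n F} (h : A * B = 1) (h2 : X * A = 0) : X = 0 :=
  cancelR h (by rw [h2, zero_mul])

end helpers

/-- (Local coding matrices of the network `𝒩₁′` force the characteristic to
divide `q`.)  If `m × m` matrices over a field `F` satisfy the listed relations, then the image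
of `q` in `F` is zero. -/
theorem charP_dvd_of_network_N1_solution
    (F : Type*) [Field F] (m q : ℕ) (hm : 1 ≤ m) (hq : 2 ≤ q)
    (G L D1 D2 D3 D5 D6 M1 M2 M3 M4 M5 : Matrix (Fin m) (Fin m) F)
    (P Q K X W R V Z : Fin (q - 1) → Matrix (Fin m) (Fin m) F)
    (U : Fin (q - 1) → Fin (q - 1) → Matrix (Fin m) (Fin m) F)
    (ha : ∀ i, G * D5 * (M1 * P i + M2 * Q i) = 0)
    (hb : G * D5 * M2 * D2 = 1)
    (hc : ∀ i, X i * K i * (M4 * M1 + M5 * M3) * D1 = 0)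
    (hd : ∀ i, X i * K i * (M4 * (M1 * P i + M2 * Q i) + M5 * M3 * P i) = 1)
    (he : ∀ i, X i * K i * (M4 * M2 * D2 + M5 * D3) = 0)
    (hf : L * D6 * M3 * D1 = 1)
    (hg : ∀ i, L * (D6 * M3 * P i + R i * W i * Q i
          + ∑ k ∈ univ.erase i, R k * (W k * Q i + U i k)) = 0)
    (hh : L * (D6 * D3 + (∑ k, R k * W k * D2)) = 0)
    (hi : ∀ i k, i ≠ k → Z i * V i * (W i * Q k + U k i) = 0)
    (hj : ∀ i, Z i * V i * W i * D2 = 1) :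
    (q : F) = 0 := by
  have i0 : Fin (q - 1) := ⟨0, by omega⟩
  have hGD5 : G * D5 * (M2 * D2) = 1 := by rw [← mul_assoc]; exact hb
  have hD1 : D1 * (L * D6 * M3) = 1 := mcomm hf
  -- (i),(j) force `W b * Q a + U a b = 0` for `a ≠ b`
  have hU : ∀ a b : Fin (q - 1), a ≠ b → W b * Q a + U a b = 0 := by
    intro a b hab
    have h1 : Z b * V b * (W b * D2) = 1 := by rw [← mul_assoc]; exact hj b
    exact zeroL h1 (hi b a hab.symm)
  -- simplified (g)
  have hg2 : ∀ i, L * D6 * M3 * P i + L * R i * W i * Q i = 0 := by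
    intro i
    have hz : ∑ k ∈ univ.erase i, R k * (W k * Q i + U i k) = 0 := by
      apply Finset.sum_eq_zero
      intro k hk
      rw [hU i k (Finset.ne_of_mem_erase hk).symm, mul_zero]
    have h := hg i
    rw [hz, add_zero] at h
    simpa only [mul_add, ← mul_assoc] using h
  -- (a),(b) solve for Q i
  have hQ : ∀ i, Q i = -(D2 * G * D5 * M1 * P i) := by
    intro i
    have h := ha i
    simp only [mul_add, ← mul_assoc] at h
    have e1 : G * D5 * M2 * Q i = -(G * D5 * M1 * P i) := eq_neg_of_add_eq_zero_right h
    apply cancelL hb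
    rw [e1, mul_neg]
    simp only [← mul_assoc]
    rw [hb, one_mul]
  -- (c) with D1 invertible
  have hc2 : ∀ i, X i * K i * M4 * M1 + X i * K i * M5 * M3 = 0 := by
    intro i
    have h0 : X i * K i * (M4 * M1 + M5 * M3) = 0 := zeroR hD1 (hc i)
    simpa only [mul_add, ← mul_assoc] using h0
  -- (e) expanded
  have he2 : ∀ i, X i * K i * M4 * M2 * D2 + X i * K i * M5 * D3 = 0 := fun i => by
    simpa only [mul_add, ← mul_assoc] using he i
  have he3 : ∀ i, X i * K i * M4 * M2 * D2 = -(X i * K i * M5 * D3) := fun i =>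
    eq_neg_of_add_eq_zero_left (he2 i)
  -- key invertibility
  have hkey : ∀ i, X i * K i * M5 * D3 * G * D5 * M1 * P i = 1 := by
    intro i
    have h4 := hd i
    simp only [mul_add, ← mul_assoc] at h4
    have h5 : X i * K i * M4 * M1 * P i + X i * K i * M5 * M3 * P i = 0 := by
      rw [← add_mul, hc2 i, zero_mul]
    have h6 : X i * K i * M4 * M1 * P i + X i * K i * M4 * M2 * Q i
          + X i * K i * M5 * M3 * P i
        = (X i * K i * M4 * M1 * P i + X i * K i * M5 * M3 * P i)
          + X i * K i * M4 * M2 * Q i := by abel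
    rw [h6, h5, zero_add] at h4
    rw [hQ i, mul_neg] at h4
    simp only [← mul_assoc] at h4
    rw [he3 i] at h4
    simpa only [neg_mul, neg_neg] using h4
  have hPT : ∀ i, P i * (X i * K i * M5 * D3 * G * D5 * M1) = 1 := fun i => mcomm (hkey i)
  have hGE : G * D5 * M1 * (P i0 * (X i0 * K i0 * M5 * D3)) = 1 := by
    have t1 : (X i0 * K i0 * M5 * D3) * (G * D5 * M1 * P i0) = 1 := by
      simpa only [← mul_assoc] using hkey i0
    have t2 := mcomm t1
    simpa only [← mul_assoc] using t2
  have hEG : (P i0 * (X i0 * K i0 * M5 * D3)) * (G * D5 * M1) = 1 := mcomm hGE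
  -- uniqueness of the right inverse of G*D5
  have hY : M1 * (P i0 * (X i0 * K i0 * M5 * D3)) = M2 * D2 := by
    apply cancelL hGD5
    rw [hGD5]
    simpa only [← mul_assoc] using hGE
  -- D3 = M3 * (inverse of G*D5*M1)
  have hS : X i0 * K i0 * M5 * (D3 * (G * D5 * M1 * P i0)) = 1 := by
    simpa only [← mul_assoc] using hkey i0
  have hMD : M3 * (P i0 * (X i0 * K i0 * M5 * D3)) = D3 := by
    apply cancelL hS
    have l1 : X i0 * K i0 * M5 * M3 = -(X i0 * K i0 * M4 * M1) :=
      eq_neg_of_add_eq_zero_right (hc2 i0)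
    calc X i0 * K i0 * M5 * (M3 * (P i0 * (X i0 * K i0 * M5 * D3)))
        = X i0 * K i0 * M5 * M3 * (P i0 * (X i0 * K i0 * M5 * D3)) := by
          simp only [← mul_assoc]
      _ = -(X i0 * K i0 * M4 * (M1 * (P i0 * (X i0 * K i0 * M5 * D3)))) := by
          rw [l1]; simp only [neg_mul, ← mul_assoc]
      _ = -(X i0 * K i0 * M4 * (M2 * D2)) := by rw [hY]
      _ = X i0 * K i0 * M5 * D3 := by rw [← mul_assoc, he3 i0, neg_neg]
  -- every middle edge contributes the same matrix
  have hLRW : ∀ i, L * R i * W i * D2 = L * D6 * D3 := by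
    intro i
    have h7 : L * R i * W i * Q i = -(L * D6 * M3 * P i) :=
      eq_neg_of_add_eq_zero_right (hg2 i)
    rw [hQ i, mul_neg] at h7
    have h8 : L * R i * W i * D2 * G * D5 * M1 * P i = L * D6 * M3 * P i := by
      have h7' := neg_injective h7
      simpa only [← mul_assoc] using h7'
    have h9 : L * R i * W i * D2 * G * D5 * M1 = L * D6 * M3 := cancelR (hPT i) h8
    calc L * R i * W i * D2
        = L * R i * W i * D2 * (G * D5 * M1 * (P i0 * (X i0 * K i0 * M5 * D3))) := by
          rw [hGE, mul_one]
      _ = L * R i * W i * D2 * G * D5 * M1 * (P i0 * (X i0 * K i0 * M5 * D3)) := by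
          simp only [← mul_assoc]
      _ = L * D6 * M3 * (P i0 * (X i0 * K i0 * M5 * D3)) := by rw [h9]
      _ = L * D6 * (M3 * (P i0 * (X i0 * K i0 * M5 * D3))) := by
          rw [mul_assoc (L * D6) M3]
      _ = L * D6 * D3 := by rw [hMD]
  -- conclude from (h)
  have hsum : L * D6 * D3 + ∑ k : Fin (q - 1), L * R k * W k * D2 = 0 := by
    simpa only [mul_add, Finset.mul_sum, ← mul_assoc] using hh
  rw [Finset.sum_congr rfl (fun k _ => hLRW k), Finset.sum_const, Finset.card_univ,
    Fintype.card_fin] at hsum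
  have hq0 : q • (L * D6 * D3) = 0 := by
    have h10 : (1 + (q - 1)) • (L * D6 * D3) = 0 := by
      rw [add_smul, one_smul]; exact hsum
    rwa [show 1 + (q - 1) = q by omega] at h10
  have h13 : D1 * (L * D6 * D3) * (G * D5 * M1) = 1 := by
    rw [← hMD]
    calc D1 * (L * D6 * (M3 * (P i0 * (X i0 * K i0 * M5 * D3)))) * (G * D5 * M1)
        = (D1 * (L * D6 * M3)) * ((P i0 * (X i0 * K i0 * M5 * D3)) * (G * D5 * M1)) := by
          simp only [← mul_assoc]
      _ = 1 := by rw [hD1, hEG, one_mul]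
  have hone : q • (1 : Matrix (Fin m) (Fin m) F) = 0 := by
    calc q • (1 : Matrix (Fin m) (Fin m) F)
        = q • (D1 * (L * D6 * D3) * (G * D5 * M1)) := by rw [h13]
      _ = D1 * (q • (L * D6 * D3)) * (G * D5 * M1) := by
          simp only [mul_smul_comm, smul_mul_assoc]
      _ = 0 := by rw [hq0, mul_zero, zero_mul]
  have h14 : (q • (1 : Matrix (Fin m) (Fin m) F)) ⟨0, hm⟩ ⟨0, hm⟩
      = (0 : Matrix (Fin m) (Fin m) F) ⟨0, hm⟩ ⟨0, hm⟩ := by rw [hone]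
  simpa using h14
end

section
/- Let F be a field, m ≥ 1, and q ≥ 1 integers. Suppose E, M_1, M_2, M_3, Q, V are m × m matrices over F, and for each i ∈ {1, …, q} there are m × m matrices C_i, D_i, G_i, A_i, K_i, R_i, U_i over F, and for each ordered pair k ≠ i in {1, …, q} an m × m matrix B_{ki} over F, satisfying: (a) E·M_1·Q = I; (b) E·(M_1 C_i + M_2 D_i) = 0 for all i; (c) G_i·(K_i Q + R_i A_i) = 0 for all i; (d) G_i·K_i·C_i = I for all i; (e) G_i·(K_i C_k + R_i B_{ki}) = 0 for all i ≠ k; (f) V·(Σ_{k=1}^{q} U_k A_k) = I; and (g) V·(Σ_{r ≠ j} U_r B_{jr} + M_3 D_j) = 0 for all j ∈ {1, …, q}. Then the image of q in F is nonzero (i.e., the characteristic of F does not divide q). -/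
open Finset

/-- (Local coding matrices of the network `𝒩₂′` force the characteristic to
not divide `q`.)  If `m × m` matrices over a field `F` satisfy the listed relations, then the
image of `q` in `F` is nonzero. -/
theorem charP_not_dvd_of_network_N2_solution
    (F : Type*) [Field F] (m q : ℕ) (hm : 1 ≤ m) (hq : 1 ≤ q)
    (E M1 M2 M3 Q V : Matrix (Fin m) (Fin m) F)
    (C D G A K R U : Fin q → Matrix (Fin m) (Fin m) F)
    (B : Fin q → Fin q → Matrix (Fin m) (Fin m) F)
    (ha : E * M1 * Q = 1)
    (hb : ∀ i, E * (M1 * C i + M2 * D i) = 0)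
    (hc : ∀ i, G i * (K i * Q + R i * A i) = 0)
    (hd : ∀ i, G i * K i * C i = 1)
    (he : ∀ i k, i ≠ k → G i * (K i * C k + R i * B k i) = 0)
    (hf : V * (∑ k, U k * A k) = 1)
    (hg : ∀ j, V * ((∑ r ∈ univ.erase j, U r * B j r) + M3 * D j) = 0) :
    (q : F) ≠ 0 := by
  intro h0
  set P := E * M1 with hPdef
  clear_value P
  have hqM : ((q : ℕ) : Matrix (Fin m) (Fin m) F) = 0 := by
    rw [← map_natCast (algebraMap F (Matrix (Fin m) (Fin m) F)) q, h0, map_zero]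
  have hPQ : P * Q = 1 := ha
  have hQP : Q * P = 1 := mul_eq_one_comm.mp hPQ
  have f1 : ∀ X : Matrix (Fin m) (Fin m) F, Q * (P * X) = X := by
    intro X; rw [← mul_assoc, hQP, one_mul]
  have hCGK : ∀ i, C i * (G i * K i) = 1 := fun i => mul_eq_one_comm.mp (hd i)
  have f3 : ∀ i (X : Matrix (Fin m) (Fin m) F), C i * (G i * (K i * X)) = X := by
    intro i X
    rw [← mul_assoc (G i) (K i) X, ← mul_assoc, hCGK i, one_mul]
  -- key consequence of (c)
  have hGRA : ∀ i, G i * (R i * A i) = -(G i * (K i * Q)) := by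
    intro i
    have h := hc i
    rw [mul_add] at h
    exact eq_neg_of_add_eq_zero_right h
  have hGRKC : ∀ i j, G i * (R i * (A i * (P * C j))) = -(G i * (K i * C j)) := by
    intro i j
    calc G i * (R i * (A i * (P * C j)))
        = (G i * (R i * A i)) * (P * C j) := by rw [mul_assoc, mul_assoc]
      _ = -(G i * (K i * Q)) * (P * C j) := by rw [hGRA i]
      _ = -(G i * (K i * (Q * (P * C j)))) := by rw [neg_mul, mul_assoc, mul_assoc]
      _ = -(G i * (K i * C j)) := by rw [f1]
  -- G i * R i is invertible with inverse T i
  have hGT : ∀ i, (-(A i * (P * C i))) * (G i * R i) = 1 := by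
    intro i
    have h : (G i * R i) * (-(A i * (P * C i))) = 1 := by
      rw [mul_neg, mul_assoc, hGRKC i i, neg_neg, ← mul_assoc]
      exact hd i
    exact mul_eq_one_comm.mp h
  have f5 : ∀ i (X : Matrix (Fin m) (Fin m) F),
      (-(A i * (P * C i))) * (G i * (R i * X)) = X := by
    intro i X
    rw [← mul_assoc (G i) (R i) X, ← mul_assoc, hGT i, one_mul]
  -- B is determined
  have hB : ∀ j r, j ≠ r → B j r = A r * (P * C j) := by
    intro j r hjr
    have h := he r j (fun hh => hjr hh.symm)
    rw [mul_add] at h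
    have h2 : G r * (R r * B j r) = -(G r * (K r * C j)) :=
      eq_neg_of_add_eq_zero_right h
    have h3 : G r * (R r * B j r) = G r * (R r * (A r * (P * C j))) := by
      rw [h2, hGRKC]
    have h4 := congrArg (fun X => (-(A r * (P * C r))) * X) h3
    simpa only [f5] using h4
  -- per-j identity
  have key2 : ∀ j, V * (M3 * (D j * (G j * (K j * Q)))) = V * (U j * A j) - 1 := by
    intro j
    have hgj := hg j
    have hsum : (∑ r ∈ univ.erase j, U r * B j r)
        = (∑ k, U k * A k) * (P * C j) - U j * (A j * (P * C j)) := by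
      rw [Finset.sum_congr rfl (fun r hr => by
        rw [hB j r (fun hh => (Finset.ne_of_mem_erase hr) hh.symm)])]
      rw [show (∑ r ∈ univ.erase j, U r * (A r * (P * C j)))
          = (∑ r ∈ univ.erase j, U r * A r) * (P * C j) by
        rw [Finset.sum_mul]; exact Finset.sum_congr rfl (fun r _ => by rw [mul_assoc])]
      rw [Finset.sum_erase_eq_sub (Finset.mem_univ j), sub_mul, mul_assoc]
    rw [hsum] at hgj
    have hVS : V * ((∑ k, U k * A k) * (P * C j)) = P * C j := by
      rw [← mul_assoc, hf, one_mul]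
    rw [mul_add, mul_sub, hVS] at hgj
    -- hgj : P * C j - V * (U j * (A j * (P * C j))) + V * (M3 * D j) = 0
    have key1 : V * (M3 * D j) = V * (U j * (A j * (P * C j))) - P * C j := by
      have h5 := eq_neg_of_add_eq_zero_right hgj
      rw [neg_sub] at h5
      exact h5
    calc V * (M3 * (D j * (G j * (K j * Q))))
        = (V * (M3 * D j)) * (G j * (K j * Q)) := by rw [mul_assoc, mul_assoc]
      _ = (V * (U j * (A j * (P * C j))) - P * C j) * (G j * (K j * Q)) := by rw [key1]
      _ = V * (U j * (A j * (P * (C j * (G j * (K j * Q))))))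
            - P * (C j * (G j * (K j * Q))) := by
          rw [sub_mul]; simp only [mul_assoc]
      _ = V * (U j * (A j * (P * Q))) - P * Q := by rw [f3]
      _ = V * (U j * A j) - 1 := by rw [hPQ, mul_one]
  -- sum over j
  have hS : V * (M3 * ((∑ j, D j * (G j * K j)) * Q)) = 1 := by
    have e1 : V * (M3 * ((∑ j, D j * (G j * K j)) * Q))
        = ∑ j, V * (M3 * (D j * (G j * (K j * Q)))) := by
      rw [Finset.sum_mul, Finset.mul_sum, Finset.mul_sum]
      exact Finset.sum_congr rfl (fun j _ => by rw [mul_assoc, mul_assoc])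
    rw [e1, Finset.sum_congr rfl (fun j _ => key2 j), Finset.sum_sub_distrib,
      ← Finset.mul_sum, hf, Finset.sum_const, Finset.card_univ, Fintype.card_fin,
      nsmul_eq_mul, hqM, zero_mul, sub_zero]
  have hVM3 : (V * M3) * ((∑ j, D j * (G j * K j)) * Q) = 1 := by
    rw [mul_assoc]; exact hS
  have hSQ : ((∑ j, D j * (G j * K j)) * Q) * (V * M3) = 1 :=
    mul_eq_one_comm.mp hVM3
  -- E * M2 = 0
  have hEM2D : ∀ j, E * (M2 * D j) = -(P * C j) := by
    intro j
    have h := hb j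
    rw [mul_add] at h
    have h2 := eq_neg_of_add_eq_zero_right h
    rwa [← mul_assoc E M1 (C j), ← hPdef] at h2
  have hEM2SQ : (E * M2) * ((∑ j, D j * (G j * K j)) * Q) = 0 := by
    have e1 : (E * M2) * ((∑ j, D j * (G j * K j)) * Q)
        = ∑ j, (E * (M2 * D j)) * (G j * (K j * Q)) := by
      rw [Finset.sum_mul, Finset.mul_sum]
      exact Finset.sum_congr rfl (fun j _ => by simp only [mul_assoc])
    rw [e1, Finset.sum_congr rfl (fun j _ => by
      rw [hEM2D j, neg_mul, mul_assoc, f3, hPQ] : ∀ _ ∈ univ, _ = -(1 : Matrix (Fin m) (Fin m) F))]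
    rw [Finset.sum_const, Finset.card_univ, Fintype.card_fin, nsmul_eq_mul, hqM, zero_mul]
  have hEM2 : E * M2 = 0 := by
    calc E * M2 = (E * M2) * (((∑ j, D j * (G j * K j)) * Q) * (V * M3)) := by
          rw [hSQ, mul_one]
      _ = ((E * M2) * ((∑ j, D j * (G j * K j)) * Q)) * (V * M3) := by
            simp only [mul_assoc]
      _ = 0 := by rw [hEM2SQ, zero_mul]
  obtain ⟨j0, hj0⟩ : ∃ j0 : Fin q, True := ⟨⟨0, hq⟩, trivial⟩
  have hPC : P * C j0 = 0 := by
    have h := hEM2D j0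
    rw [← mul_assoc, hEM2, zero_mul] at h
    exact neg_eq_zero.mp h.symm
  have hC0 : C j0 = 0 := by rw [← f1 (C j0), hPC, mul_zero]
  have h1 : (1 : Matrix (Fin m) (Fin m) F) = 0 := by rw [← hd j0, hC0, mul_zero]
  have h2 : (1 : Matrix (Fin m) (Fin m) F) ⟨0, hm⟩ ⟨0, hm⟩
      = (0 : Matrix (Fin m) (Fin m) F) ⟨0, hm⟩ ⟨0, hm⟩ := by rw [h1]
  simp [Matrix.one_apply] at h2
end
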